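/- Let φ, ψ ∈ C^∞[0,∞) be bounded non-negative functions with disjoint supports, at least one compactly supported, and suppose x > y and x − y > a > 0, x/y ≥ c > 1 for all x ∈ supp φ, y ∈ supp ψ. Let δ > 0. Then for every N ∈ ℕ there is a constant C_N > 0, depending only on ‖φ‖_∞, ‖ψ‖_∞, a, c, δ and N, such that for all ν ≥ 3/2 + δ, all z > 0, and all x ∈ supp φ, y ∈ supp ψ: | ν² φ(x) √(xy) K_ν(xz) I_ν(yz) ψ(y) | ≤ C_N (νz)^{-N}. -/

import Mathlib

/-!
# Statement 8

Off-diagonal estimate for the Schwartz kernel `φ(x)√(xy) K_ν(xz) I_ν(yz) ψ(y)` of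
`Φ ∘ G_ν(z) ∘ Ψ`, where `G_ν(z)` is the resolvent of the scalar Bessel operator:
rapid decay in `νz`.
-/

open Real MeasureTheory Set Function

/-- The modified Bessel function of the second kind,
`K_ν(x) = ∫₀^∞ exp (-x cosh t) · cosh (ν t) dt`. -/
noncomputable def besselK (ν x : ℝ) : ℝ :=
  ∫ t in Ioi (0 : ℝ), Real.exp (-x * Real.cosh t) * Real.cosh (ν * t)

/-- The modified Bessel function of the first kind,
`I_ν(x) = ∑_{m ≥ 0} (x/2)^{2m+ν} / (m! Γ(m+ν+1))`. -/
noncomputable def besselI (ν x : ℝ) : ℝ :=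
  ∑' m : ℕ, (x / 2) ^ (2 * (m : ℝ) + ν) / (m.factorial * Real.Gamma ((m : ℝ) + ν + 1))


namespace BesselProof
open Filter


lemma half_exp_le_cosh (t : ℝ) : exp t / 2 ≤ cosh t := by
  rw [Real.cosh_eq]
  have := (Real.exp_pos (-t)).le
  linarith

lemma cosh_le_exp {t : ℝ} (ht : 0 ≤ t) : cosh t ≤ exp t := by
  rw [Real.cosh_eq]
  have h : exp (-t) ≤ exp t := Real.exp_le_exp.2 (by linarith)
  linarith

lemma one_add_quarter_sq_le_cosh {t : ℝ} (ht : 0 ≤ t) : 1 + t ^ 2 / 4 ≤ cosh t := by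
  rw [Real.cosh_eq]
  have h1 : 1 + t + t ^ 2 / 2 ≤ exp t := by
    have := Real.sum_le_exp_of_nonneg ht 3
    simp [Finset.sum_range_succ, Nat.factorial] at this
    linarith
  have h2 : 1 - t ≤ exp (-t) := by
    have := Real.add_one_le_exp (-t); linarith
  linarith

/-- master integrable majorant -/
lemma integrable_master {X : ℝ} (r : ℝ) (hX : 0 < X) :
    IntegrableOn (fun t => exp (-X * cosh t + r * t)) (Ioi 0) := by
  have hg : Integrable (fun t : ℝ => exp (-X + r ^ 2 / X) * exp (-(X/4) * (t - 2*r/X) ^ 2)) := by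
    exact ((integrable_exp_neg_mul_sq (by positivity : (0:ℝ) < X/4)).comp_sub_right
      (2*r/X)).const_mul _
  refine Integrable.mono' hg.integrableOn ?_ ?_
  · exact (Continuous.aestronglyMeasurable (by continuity))
  · rw [ae_restrict_iff' measurableSet_Ioi]
    filter_upwards with t ht
    rw [norm_of_nonneg (Real.exp_pos _).le, ← Real.exp_add]
    apply Real.exp_le_exp.2
    have h := one_add_quarter_sq_le_cosh (le_of_lt ht)
    have hbound : -X * cosh t ≤ -X * (1 + t ^ 2 / 4) := by
      apply mul_le_mul_of_nonpos_left h (by linarith)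
    have key : -X * (1 + t ^ 2/4) + r * t = -X + r ^ 2 / X + -(X/4) * (t - 2*r/X) ^ 2 := by
      field_simp; ring
    linarith [hbound, key]

lemma cosh_mul_le_exp_abs {s t : ℝ} (ht : 0 ≤ t) (hs : 0 ≤ s) : cosh (s * t) ≤ exp (s * t) :=
  cosh_le_exp (by positivity)

lemma besselK_nonneg {s X : ℝ} : 0 ≤ besselK s X := by
  apply setIntegral_nonneg measurableSet_Ioi
  intro t _; positivity


lemma abs_sinh_le_cosh (x : ℝ) : |sinh x| ≤ cosh x := by
  rw [abs_le, Real.sinh_eq, Real.cosh_eq]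
  constructor <;> nlinarith [Real.exp_pos x, Real.exp_pos (-x)]

lemma cosh_mul_le_exp_abs' (s : ℝ) {t : ℝ} (ht : 0 ≤ t) : cosh (s * t) ≤ exp ((abs s) * t) := by
  have h1 : |s * t| = (abs s) * t := by rw [abs_mul, abs_of_nonneg ht]
  rw [← Real.cosh_abs (s*t), h1]
  exact cosh_le_exp (by positivity)

/-- integrability of the K-integrand, any order. -/
lemma integrableOn_besselK (s : ℝ) {X : ℝ} (hX : 0 < X) :
    IntegrableOn (fun t => exp (-X * cosh t) * cosh (s * t)) (Ioi 0) := by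
  refine Integrable.mono' (integrable_master (abs s) hX) ?_ ?_
  · exact (Continuous.aestronglyMeasurable (by continuity))
  · rw [ae_restrict_iff' measurableSet_Ioi]
    filter_upwards with t ht
    rw [norm_of_nonneg (by positivity), Real.exp_add]
    exact mul_le_mul_of_nonneg_left (cosh_mul_le_exp_abs' s ht.le) (Real.exp_pos _).le

/-- integrability of `cosh t * exp(-X cosh t) * cosh (s t)` -/
lemma integrableOn_besselK' (s : ℝ) {X : ℝ} (hX : 0 < X) :
    IntegrableOn (fun t => cosh t * (exp (-X * cosh t) * cosh (s * t))) (Ioi 0) := by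
  refine Integrable.mono' (integrable_master ((abs s)+1) hX) ?_ ?_
  · exact (Continuous.aestronglyMeasurable (by continuity))
  · rw [ae_restrict_iff' measurableSet_Ioi]
    filter_upwards with t ht
    rw [norm_of_nonneg (by positivity), Real.exp_add]
    have h1 : cosh t * cosh (s*t) ≤ exp (((abs s)+1) * t) := by
      have := mul_le_mul (cosh_le_exp ht.le) (cosh_mul_le_exp_abs' s ht.le)
        (Real.cosh_pos _).le (Real.exp_pos _).le
      rw [← Real.exp_add] at this
      calc cosh t * cosh (s*t) ≤ exp (t + (abs s)*t) := this
        _ = exp (((abs s)+1) * t) := by congr 1; ring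
    calc cosh t * (exp (-X * cosh t) * cosh (s*t))
        = exp (-X * cosh t) * (cosh t * cosh (s*t)) := by ring
      _ ≤ exp (-X * cosh t) * exp (((abs s)+1) * t) := mul_le_mul_of_nonneg_left h1 (Real.exp_pos _).le

lemma integrableOn_besselK_sinh (s : ℝ) {X : ℝ} (hX : 0 < X) :
    IntegrableOn (fun t => sinh t * (exp (-X * cosh t) * sinh (s * t))) (Ioi 0) := by
  refine Integrable.mono' ((integrableOn_besselK' s hX)) ?_ ?_
  · exact (Continuous.aestronglyMeasurable (by continuity))
  · rw [ae_restrict_iff' measurableSet_Ioi]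
    filter_upwards with t ht
    calc ‖sinh t * (exp (-X * cosh t) * sinh (s*t))‖
        = |sinh t| * (exp (-X * cosh t) * |sinh (s*t)|) := by
          rw [norm_eq_abs, abs_mul, abs_mul, abs_of_pos (Real.exp_pos _)]
      _ ≤ cosh t * (exp (-X * cosh t) * cosh (s*t)) := by
          apply mul_le_mul (abs_sinh_le_cosh t)
            (mul_le_mul_of_nonneg_left (abs_sinh_le_cosh _) (Real.exp_pos _).le)
            (by positivity) (Real.cosh_pos _).le

/-- product-to-sum for cosh -/
lemma cosh_mul_cosh (a b : ℝ) : cosh a * cosh b = (cosh (a+b) + cosh (a-b)) / 2 := by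
  rw [Real.cosh_add, Real.cosh_sub]; ring

lemma sinh_mul_sinh (a b : ℝ) : sinh a * sinh b = (cosh (a+b) - cosh (a-b)) / 2 := by
  rw [Real.cosh_add, Real.cosh_sub]; ring

/-- Derivative of `besselK` in the argument. -/
lemma besselK_hasDerivAt (s : ℝ) {Y : ℝ} (hY : 0 < Y) :
    HasDerivAt (fun W => besselK s W) (-((besselK (s+1) Y + besselK (s-1) Y) / 2)) Y := by
  have key : ∀ t : ℝ, -cosh t * (exp (-Y * cosh t) * cosh (s*t))
      = -(((exp (-Y * cosh t) * cosh ((s+1) * t)) + (exp (-Y * cosh t) * cosh ((s-1) * t))) / 2) := by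
    intro t
    have h := cosh_mul_cosh t (s*t)
    have e1 : t + s*t = (s+1)*t := by ring
    have e2 : t - s*t = -((s-1)*t) := by ring
    rw [e1, e2, Real.cosh_neg] at h
    nlinarith [Real.exp_pos (-Y * cosh t), h]
  have main := hasDerivAt_integral_of_dominated_loc_of_deriv_le
    (μ := volume.restrict (Ioi (0:ℝ))) (x₀ := Y)
    (F := fun W t => exp (-W * cosh t) * cosh (s * t))
    (F' := fun W t => -cosh t * (exp (-W * cosh t) * cosh (s * t)))
    (bound := fun t => cosh t * (exp (-(Y/2) * cosh t) * cosh (s * t)))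
    (Metric.ball_mem_nhds Y (half_pos hY))
    (Eventually.of_forall (fun W => (Continuous.aestronglyMeasurable (by continuity))))
    (integrableOn_besselK s hY)
    (Continuous.aestronglyMeasurable (by continuity))
    ?_ (integrableOn_besselK' s (half_pos hY)) ?_
  · have h2 : ∫ t in Ioi (0:ℝ), -cosh t * (exp (-Y * cosh t) * cosh (s*t))
        = -((besselK (s+1) Y + besselK (s-1) Y) / 2) := by
      rw [integral_congr_ae (Eventually.of_forall key), integral_neg, integral_div,
        integral_add (integrableOn_besselK (s+1) hY) (integrableOn_besselK (s-1) hY)]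
      rfl
    rw [← h2]
    exact main.2
  · -- bound on F'
    rw [ae_restrict_iff' measurableSet_Ioi]
    filter_upwards with t ht
    intro W hW
    rw [Metric.mem_ball, Real.dist_eq, abs_lt] at hW
    have hW2 : Y/2 ≤ W := by linarith [hW.1]
    rw [norm_mul, norm_neg, norm_mul, norm_eq_abs, norm_eq_abs, norm_eq_abs,
      abs_of_pos (Real.cosh_pos t), abs_of_pos (Real.exp_pos _), abs_of_pos (Real.cosh_pos _)]
    apply mul_le_mul_of_nonneg_left _ (Real.cosh_pos t).le
    apply mul_le_mul_of_nonneg_right _ (Real.cosh_pos _).le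
    apply Real.exp_le_exp.2
    have hc := Real.one_le_cosh t
    nlinarith
  · -- differentiability pointwise
    rw [ae_restrict_iff' measurableSet_Ioi]
    filter_upwards with t ht
    intro W hW
    have : HasDerivAt (fun W : ℝ => exp (-W * cosh t)) (-cosh t * exp (-W * cosh t)) W := by
      have h1 : HasDerivAt (fun W : ℝ => -W * cosh t) (-cosh t) W := by
        simpa using ((hasDerivAt_id W).neg.mul_const (cosh t))
      simpa [mul_comm] using h1.exp
    simpa [mul_comm, mul_assoc, mul_left_comm] using this.mul_const (cosh (s*t))

/-- Recurrence `K_{s+1} - K_{s-1} = (2s/Y) K_s`, via integration by parts. -/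
lemma besselK_rec (s : ℝ) {Y : ℝ} (hY : 0 < Y) :
    besselK (s+1) Y - besselK (s-1) Y = (2*s/Y) * besselK s Y := by
  -- H t = exp (-Y cosh t) * sinh (s t); ∫ H' = -H 0 = 0
  set H : ℝ → ℝ := fun t => exp (-Y * cosh t) * sinh (s*t) with hH
  have hderiv : ∀ t : ℝ, HasDerivAt H
      (-Y * sinh t * (exp (-Y * cosh t) * sinh (s*t)) + s * (exp (-Y * cosh t) * cosh (s*t))) t := by
    intro t
    have h1 : HasDerivAt (fun t : ℝ => exp (-Y * cosh t)) (-Y * sinh t * exp (-Y * cosh t)) t := by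
      have : HasDerivAt (fun t : ℝ => -Y * cosh t) (-Y * sinh t) t :=
        (Real.hasDerivAt_cosh t).const_mul (-Y)
      simpa [mul_comm] using this.exp
    have h2 : HasDerivAt (fun t : ℝ => sinh (s*t)) (s * cosh (s*t)) t := by
      have : HasDerivAt (fun t : ℝ => s*t) s t := by
        simpa using (hasDerivAt_id t).const_mul s
      simpa [mul_comm, Function.comp_def] using (Real.hasDerivAt_sinh (s*t)).comp t this
    have := h1.mul h2
    refine this.congr_deriv ?_
    ring
  have hint : IntegrableOn (fun t => -Y * sinh t * (exp (-Y * cosh t) * sinh (s*t))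
      + s * (exp (-Y * cosh t) * cosh (s*t))) (Ioi 0) := by
    apply Integrable.add
    · simpa [mul_assoc] using ((integrableOn_besselK_sinh s hY).const_mul (-Y))
    · exact (integrableOn_besselK s hY).const_mul s
  have htend : Tendsto H atTop (nhds 0) := by
    have hev : ∀ᶠ t in atTop, ‖H t‖ ≤ exp (-t) := by
      have h1 : Tendsto (fun t : ℝ => exp t / t) atTop atTop := by
        simpa using Real.tendsto_exp_div_pow_atTop 1
      filter_upwards [eventually_gt_atTop (0:ℝ),
        h1.eventually_ge_atTop ((2/Y) * ((abs s) + 1))] with t ht hdiv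
      have hYe : ((abs s) + 1) * t ≤ (Y/2) * exp t := by
        rw [le_div_iff₀ ht] at hdiv
        calc ((abs s)+1) * t = (Y/2) * ((2/Y) * ((abs s)+1) * t) := by field_simp
          _ ≤ (Y/2) * exp t := by
              apply mul_le_mul_of_nonneg_left _ (by positivity)
              nlinarith
      have hH1 : |H t| ≤ exp (-(Y/2) * exp t + (abs s) * t) := by
        rw [hH, abs_mul, abs_of_pos (Real.exp_pos _)]
        have h1' : |sinh (s*t)| ≤ cosh (s*t) := abs_sinh_le_cosh _
        have h2 : cosh (s*t) ≤ exp ((abs s) * t) := cosh_mul_le_exp_abs' s ht.le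
        have h3 : exp (-Y * cosh t) ≤ exp (-(Y/2) * exp t) := by
          apply Real.exp_le_exp.2
          nlinarith [half_exp_le_cosh t]
        calc exp (-Y * cosh t) * |sinh (s*t)| ≤ exp (-(Y/2) * exp t) * exp ((abs s) * t) :=
              mul_le_mul h3 (h1'.trans h2) (abs_nonneg _) (Real.exp_pos _).le
          _ = exp (-(Y/2) * exp t + (abs s) * t) := by rw [← Real.exp_add]
      rw [norm_eq_abs]
      refine hH1.trans (Real.exp_le_exp.2 ?_)
      nlinarith
    exact squeeze_zero_norm' hev (Real.tendsto_exp_neg_atTop_nhds_zero)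
  -- the integration by parts identity
  have hibp := integral_Ioi_of_hasDerivAt_of_tendsto
    ((hderiv 0).continuousAt.continuousWithinAt) (fun t _ => hderiv t) hint htend
  have hH0 : H 0 = 0 := by simp [hH]
  rw [hH0, sub_zero] at hibp
  set J : ℝ := ∫ t in Ioi (0:ℝ), sinh t * (exp (-Y * cosh t) * sinh (s*t)) with hJdef
  have hsplit : (∫ t in Ioi (0:ℝ), (-Y * sinh t * (exp (-Y * cosh t) * sinh (s*t))
      + s * (exp (-Y * cosh t) * cosh (s*t)))) = (-Y) * J + s * besselK s Y := by
    rw [integral_add (by simpa [mul_assoc] using ((integrableOn_besselK_sinh s hY).const_mul (-Y)))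
      ((integrableOn_besselK s hY).const_mul s)]
    congr 1
    · rw [hJdef, ← integral_const_mul]
      apply setIntegral_congr_fun measurableSet_Ioi
      intro t _
      ring
    · rw [besselK, ← integral_const_mul]
  rw [hsplit] at hibp
  have hdiff : besselK (s+1) Y - besselK (s-1) Y = 2 * J := by
    rw [besselK, besselK, ← integral_sub (integrableOn_besselK (s+1) hY)
      (integrableOn_besselK (s-1) hY), hJdef, ← integral_const_mul]
    apply setIntegral_congr_fun measurableSet_Ioi
    intro t _
    dsimp only
    have h := sinh_mul_sinh t (s*t)
    have e1 : t + s*t = (s+1)*t := by ring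
    have e2 : t - s*t = -((s-1)*t) := by ring
    rw [e1, e2, Real.cosh_neg] at h
    nlinarith [Real.exp_pos (-Y * cosh t), h]
  have hYne : Y ≠ 0 := ne_of_gt hY
  rw [hdiff]
  have hJval : J = s * besselK s Y / Y := by
    field_simp
    linarith
  rw [hJval]
  field_simp


-- placeholders for p1 lemmas
/-- K is decreasing in the argument, with exponential gain. -/
lemma besselK_le_exp_mul {s X Y : ℝ} (hs : 0 ≤ s) (h0 : 0 < Y) (hYX : Y ≤ X) :
    besselK s X ≤ exp (-(X - Y)) * besselK s Y := by
  have hX : 0 < X := lt_of_lt_of_le h0 hYX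
  rw [besselK, besselK, ← integral_const_mul]
  apply setIntegral_mono_on (integrableOn_besselK s hX)
    (((integrableOn_besselK s h0)).const_mul _) measurableSet_Ioi
  intro t ht
  have h1 : exp (-X * cosh t) ≤ exp (-(X - Y)) * exp (-Y * cosh t) := by
    rw [← Real.exp_add]
    apply Real.exp_le_exp.2
    have hc : 1 ≤ cosh t := Real.one_le_cosh t
    nlinarith [sub_nonneg.2 hYX]
  calc exp (-X * cosh t) * cosh (s*t) ≤ (exp (-(X-Y)) * exp (-Y * cosh t)) * cosh (s*t) :=
        mul_le_mul_of_nonneg_right h1 (Real.cosh_pos _).le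
    _ = exp (-(X-Y)) * (exp (-Y * cosh t) * cosh (s*t)) := by ring

/-- K is increasing in the order (for nonnegative order). -/
lemma besselK_mono_order {s s' X : ℝ} (hs : 0 ≤ s) (hss' : s ≤ s') (hX : 0 < X) :
    besselK s X ≤ besselK s' X := by
  apply setIntegral_mono_on (integrableOn_besselK s hX)
    (integrableOn_besselK s' hX) measurableSet_Ioi
  intro t ht
  apply mul_le_mul_of_nonneg_left _ (Real.exp_pos _).le
  rw [Real.cosh_le_cosh]
  rw [abs_of_nonneg (mul_nonneg hs ht.le), abs_of_nonneg (mul_nonneg (hs.trans hss') ht.le)]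
  exact mul_le_mul_of_nonneg_right hss' ht.le

lemma image_scaled_exp {b : ℝ} (hb : 0 < b) :
    (fun t => b * exp t) '' (Ioi 0) = Ioi b := by
  ext u
  constructor
  · rintro ⟨t, ht, rfl⟩
    have : 1 < exp t := by rw [← Real.exp_zero]; exact Real.exp_lt_exp.2 ht
    simpa using (by nlinarith : b < b * exp t)
  · intro hu
    have hu' : (0:ℝ) < u := hb.trans hu
    refine ⟨Real.log (u / b), ?_, ?_⟩
    · apply Real.log_pos; rw [lt_div_iff₀ hb]; simpa using hu
    · show b * Real.exp (Real.log (u / b)) = u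
      rw [Real.exp_log (by positivity)]; field_simp

/-- Change of variables: `∫_{t>0} (b e^t) g(b e^t) dt = ∫_{u>b} g u du` -/
lemma integral_scaled_exp {b : ℝ} (hb : 0 < b) (g : ℝ → ℝ) :
    ∫ u in Ioi b, g u = ∫ t in Ioi (0:ℝ), (b * exp t) * g (b * exp t) := by
  rw [← image_scaled_exp hb]
  rw [integral_image_eq_integral_abs_deriv_smul measurableSet_Ioi
      (fun t _ => ((Real.hasDerivAt_exp t).const_mul b).hasDerivWithinAt) ?_ g]
  · apply setIntegral_congr_fun measurableSet_Ioi
    intro t ht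
    simp only [smul_eq_mul]
    rw [abs_of_pos (by positivity)]
  · intro t _ t' _ h
    simpa [Real.exp_eq_exp] using mul_left_cancel₀ (ne_of_gt hb) h

/-- The fundamental bound `K_s(X) ≤ (2/X)^s Γ(s)`. -/
lemma besselK_le_gamma {s X : ℝ} (hs : 0 < s) (hX : 0 < X) :
    besselK s X ≤ (2 / X) ^ s * Real.Gamma s := by
  have hint : IntegrableOn (fun t => exp (-(X/2) * exp t + s * t)) (Ioi 0) := by
    refine Integrable.mono' (integrable_master s (by positivity : (0:ℝ) < X/2)) ?_ ?_
    · exact (Continuous.aestronglyMeasurable (by continuity))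
    · rw [ae_restrict_iff' measurableSet_Ioi]
      filter_upwards with t ht
      rw [norm_of_nonneg (Real.exp_pos _).le]
      apply Real.exp_le_exp.2
      have := cosh_le_exp ht.le
      nlinarith [half_exp_le_cosh t]
  have step1 : besselK s X ≤ ∫ t in Ioi (0:ℝ), exp (-(X/2) * exp t + s * t) := by
    apply setIntegral_mono_on (integrableOn_besselK s hX) hint measurableSet_Ioi
    intro t ht
    rw [Real.exp_add]
    apply mul_le_mul (Real.exp_le_exp.2 (by nlinarith [half_exp_le_cosh t]))
      (cosh_mul_le_exp_abs ht.le hs.le) (Real.cosh_pos _).le (Real.exp_pos _).le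
  have step2 : ∫ t in Ioi (0:ℝ), exp (-(X/2) * exp t + s * t)
      = ∫ u in Ioi (X/2), exp (-u) * (2 * u / X) ^ s / u := by
    rw [integral_scaled_exp (by positivity : (0:ℝ) < X/2)]
    apply setIntegral_congr_fun measurableSet_Ioi
    intro t ht
    have he : (0:ℝ) < exp t := Real.exp_pos t
    have h2 : 2 * (X / 2 * exp t) / X = exp t := by field_simp
    have hc : X / 2 * exp t ≠ 0 := by positivity
    dsimp only
    rw [h2, ← Real.exp_mul, ← mul_div_assoc, mul_div_cancel_left₀ _ hc, ← Real.exp_add]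
    congr 1
    ring
  have step3 : ∫ u in Ioi (X/2), exp (-u) * (2 * u / X) ^ s / u
      ≤ (2 / X) ^ s * Real.Gamma s := by
    have heq : ∀ u ∈ Ioi (X/2), exp (-u) * (2 * u / X) ^ s / u
        = (2/X) ^ s * (exp (-u) * u ^ (s - 1)) := by
      intro u hu
      have hu' : (0:ℝ) < u := lt_trans (by positivity) hu
      have : (2 * u / X) = (2/X) * u := by ring
      rw [this, Real.mul_rpow (by positivity) hu'.le, Real.rpow_sub_one (ne_of_gt hu')]
      field_simp
    rw [setIntegral_congr_fun measurableSet_Ioi heq, integral_const_mul]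
    apply mul_le_mul_of_nonneg_left _ (by positivity)
    rw [Real.Gamma_eq_integral hs]
    apply setIntegral_mono_set (Real.GammaIntegral_convergent hs)
    · filter_upwards [ae_restrict_mem measurableSet_Ioi] with u hu
      exact mul_nonneg (Real.exp_pos _).le (Real.rpow_nonneg hu.le _)
    · apply HasSubset.Subset.eventuallyLE
      exact Ioi_subset_Ioi (by positivity)
  rw [step2] at step1
  linarith



/-- the `m`-th term of the Bessel-I series -/
noncomputable def Iterm (s Y : ℝ) (m : ℕ) : ℝ :=
  (Y / 2) ^ (2 * (m : ℝ) + s) / (m.factorial * Real.Gamma ((m : ℝ) + s + 1))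

lemma besselI_eq_tsum (s Y : ℝ) : besselI s Y = ∑' m, Iterm s Y m := rfl

lemma gamma_mul_factorial_le {s : ℝ} (hs : 1 ≤ s) (m : ℕ) :
    Real.Gamma s * m.factorial ≤ Real.Gamma ((m : ℝ) + s) := by
  induction m with
  | zero => simp
  | succ m ih =>
    have hpos : (0:ℝ) < (m:ℝ) + s := by positivity
    have hg : (0:ℝ) < Real.Gamma s := Real.Gamma_pos_of_pos (by linarith)
    have hf : (0:ℝ) < (m.factorial : ℝ) := by positivity
    have h1 : Real.Gamma (((m+1:ℕ):ℝ) + s) = ((m:ℝ) + s) * Real.Gamma ((m:ℝ) + s) := by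
      rw [show (((m+1:ℕ)):ℝ) + s = ((m:ℝ) + s) + 1 by push_cast; ring,
        Real.Gamma_add_one (ne_of_gt hpos)]
    rw [h1, Nat.factorial_succ]
    push_cast
    nlinarith [ih, mul_nonneg (by linarith : (0:ℝ) ≤ s - 1) (mul_pos hg hf).le,
      mul_le_mul_of_nonneg_left ih hpos.le]

lemma gamma_shift_pos {s : ℝ} (hs : 0 ≤ s) (m : ℕ) : (0:ℝ) < Real.Gamma ((m:ℝ) + s + 1) :=
  Real.Gamma_pos_of_pos (by positivity)

lemma Iterm_nonneg {s Y : ℝ} (hs : 0 ≤ s) (hY : 0 ≤ Y) (m : ℕ) : 0 ≤ Iterm s Y m := by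
  unfold Iterm
  have := gamma_shift_pos hs m
  have : (0:ℝ) < m.factorial * Real.Gamma ((m:ℝ) + s + 1) := by positivity
  positivity

lemma Iterm_num_eq {s Y : ℝ} (hY : 0 < Y) (m : ℕ) :
    (Y / 2) ^ (2 * (m : ℝ) + s) = (Y ^ 2 / 4) ^ m * (Y / 2) ^ s := by
  rw [Real.rpow_add (by positivity), show (2:ℝ) * (m:ℝ) = ((2 * m : ℕ) : ℝ) by push_cast; ring,
    Real.rpow_natCast, pow_mul]
  have : (Y/2)^2 = Y^2/4 := by ring
  rw [this]

lemma Iterm_le {s Y : ℝ} (hs : 0 ≤ s) (hY : 0 < Y) (m : ℕ) :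
    Iterm s Y m ≤ ((Y/2) ^ s / Real.Gamma (s+1)) * ((Y^2/4) ^ m / m.factorial) := by
  unfold Iterm
  rw [Iterm_num_eq hY]
  have hG1 : (0:ℝ) < Real.Gamma (s+1) := Real.Gamma_pos_of_pos (by positivity)
  have hGle : Real.Gamma (s+1) ≤ Real.Gamma ((m:ℝ) + s + 1) := by
    have h := gamma_mul_factorial_le (s := s+1) (by linarith) m
    rw [show ((m:ℝ) + (s+1)) = (m:ℝ) + s + 1 by ring] at h
    have hf1 : (1:ℝ) ≤ m.factorial := by exact_mod_cast Nat.one_le_iff_ne_zero.2 m.factorial_ne_zero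
    nlinarith [mul_nonneg hG1.le (by linarith : (0:ℝ) ≤ (m.factorial:ℝ) - 1)]
  rw [show ((Y/2)^s / Real.Gamma (s+1)) * ((Y^2/4)^m / m.factorial)
      = (Y^2/4)^m * (Y/2)^s / (m.factorial * Real.Gamma (s+1)) by ring]
  apply div_le_div_of_nonneg_left _ (by positivity) _
  · positivity
  · apply mul_le_mul_of_nonneg_left _ (by positivity)
    calc Real.Gamma (s+1) ≤ Real.Gamma (s+1) * m.factorial := by
          have hf1 : (1:ℝ) ≤ m.factorial := by
            exact_mod_cast Nat.one_le_iff_ne_zero.2 m.factorial_ne_zero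
          nlinarith
      _ ≤ Real.Gamma ((m:ℝ) + (s+1)) := gamma_mul_factorial_le (by linarith) m
      _ = Real.Gamma ((m:ℝ) + s + 1) := by ring_nf

lemma Iterm_summable {s Y : ℝ} (hs : 0 ≤ s) (hY : 0 < Y) : Summable (Iterm s Y) := by
  apply Summable.of_nonneg_of_le (Iterm_nonneg hs hY.le) (Iterm_le hs hY)
  exact (Real.summable_pow_div_factorial (Y^2/4)).mul_left _

lemma besselI_nonneg {s Y : ℝ} (hs : 0 ≤ s) (hY : 0 ≤ Y) : 0 ≤ besselI s Y :=
  tsum_nonneg (Iterm_nonneg hs hY)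

lemma besselI_le {s Y : ℝ} (hs : 0 ≤ s) (hY : 0 < Y) :
    besselI s Y ≤ (Y/2) ^ s * exp (Y^2/4) / Real.Gamma (s+1) := by
  rw [besselI_eq_tsum]
  calc ∑' m, Iterm s Y m
      ≤ ∑' m, ((Y/2) ^ s / Real.Gamma (s+1)) * ((Y^2/4) ^ m / m.factorial) :=
        Summable.tsum_le_tsum (Iterm_le hs hY) (Iterm_summable hs hY)
          ((Real.summable_pow_div_factorial (Y^2/4)).mul_left _)
    _ = ((Y/2) ^ s / Real.Gamma (s+1)) * ∑' m, ((Y^2/4) ^ m / m.factorial) := tsum_mul_left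
    _ ≤ ((Y/2) ^ s / Real.Gamma (s+1)) * exp (Y^2/4) := by
        have hG1 : (0:ℝ) < Real.Gamma (s+1) := Real.Gamma_pos_of_pos (by positivity)
        apply mul_le_mul_of_nonneg_left _
          (div_nonneg (Real.rpow_nonneg (by positivity) _) hG1.le)
        apply Real.tsum_le_of_sum_range_le (fun n => by positivity)
        exact fun n => Real.sum_le_exp_of_nonneg (by positivity) n
    _ = (Y/2) ^ s * exp (Y^2/4) / Real.Gamma (s+1) := by ring

lemma besselI_ratio {s Y X : ℝ} (hs : 0 ≤ s) (hY : 0 < Y) (hYX : Y ≤ X) :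
    besselI s Y ≤ (Y/X) ^ s * besselI s X := by
  have hX : 0 < X := lt_of_lt_of_le hY hYX
  rw [besselI_eq_tsum, besselI_eq_tsum, ← tsum_mul_left]
  apply Summable.tsum_le_tsum _ (Iterm_summable hs hY)
    (((Iterm_summable hs hX)).mul_left _)
  intro m
  unfold Iterm
  rw [mul_div_assoc']
  have hD : (0:ℝ) < m.factorial * Real.Gamma ((m:ℝ) + s + 1) := by
    have := gamma_shift_pos hs m
    positivity
  have hm : (0:ℝ) ≤ (m:ℝ) := Nat.cast_nonneg m
  gcongr
  calc (Y/2) ^ (2*(m:ℝ)+s) = (Y/X) ^ (2*(m:ℝ)+s) * (X/2) ^ (2*(m:ℝ)+s) := by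
        rw [← Real.mul_rpow (by positivity) (by positivity)]
        congr 1
        field_simp
    _ ≤ (Y/X) ^ s * (X/2) ^ (2*(m:ℝ)+s) := by
        apply mul_le_mul_of_nonneg_right _ (Real.rpow_nonneg (by positivity) _)
        apply Real.rpow_le_rpow_of_exponent_ge (by positivity)
          (div_le_one_of_le₀ hYX (by positivity)) (by linarith)

/-- the term of the derivative series -/
noncomputable def Dterm (s Y : ℝ) (m : ℕ) : ℝ :=
  (2 * (m : ℝ) + s) * (Y / 2) ^ (2 * (m : ℝ) + s - 1) /
    (2 * (m.factorial * Real.Gamma ((m : ℝ) + s + 1)))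

lemma Iterm_zero_rec {s Y : ℝ} (hs : 1 ≤ s) (hY : 0 < Y) :
    Iterm (s-1) Y 0 = (2 * s / Y) * Iterm s Y 0 := by
  unfold Iterm
  have h0 : (0:ℝ) < s := by linarith
  have hG : Real.Gamma ((0:ℕ) + s + 1) = s * Real.Gamma s := by
    push_cast
    rw [show (0:ℝ) + s + 1 = s + 1 by ring, Real.Gamma_add_one (ne_of_gt h0)]
  have hGm : Real.Gamma (((0:ℕ):ℝ) + (s-1) + 1) = Real.Gamma s := by norm_num
  have hnum : (Y/2) ^ (2*((0:ℕ):ℝ) + s) = (Y/2) ^ (2*((0:ℕ):ℝ) + (s-1)) * (Y/2) := by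
    rw [← Real.rpow_add_one (by positivity : (Y/2) ≠ 0)]
    norm_num
  push_cast at hG hGm hnum ⊢
  rw [hG, hGm, hnum]
  have hGpos : (0:ℝ) < Real.Gamma s := Real.Gamma_pos_of_pos h0
  field_simp

lemma Iterm_succ_rec {s Y : ℝ} (hs : 1 ≤ s) (hY : 0 < Y) (m : ℕ) :
    Iterm (s-1) Y (m+1) = (2 * s / Y) * Iterm s Y (m+1) + Iterm (s+1) Y m := by
  unfold Iterm
  have h0 : (0:ℝ) < s := by linarith
  have hp1 : (0:ℝ) < (m:ℝ) + s + 1 := by positivity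
  -- gamma relation
  have hG2 : Real.Gamma ((m:ℝ) + s + 2) = ((m:ℝ) + s + 1) * Real.Gamma ((m:ℝ) + s + 1) := by
    rw [show (m:ℝ) + s + 2 = ((m:ℝ) + s + 1) + 1 by ring, Real.Gamma_add_one (ne_of_gt hp1)]
  have e1 : ((m+1:ℕ):ℝ) + (s-1) + 1 = (m:ℝ) + s + 1 := by push_cast; ring
  have e2 : ((m+1:ℕ):ℝ) + s + 1 = (m:ℝ) + s + 2 := by push_cast; ring
  have e3 : (m:ℝ) + (s+1) + 1 = (m:ℝ) + s + 2 := by ring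
  rw [e1, e2, e3, hG2]
  -- exponents
  have hb : (0:ℝ) < Y/2 := by positivity
  have f1 : 2*((m+1:ℕ):ℝ) + (s-1) = 2*(m:ℝ) + s + 1 := by push_cast; ring
  have f2 : 2*((m+1:ℕ):ℝ) + s = (2*(m:ℝ) + s + 1) + 1 := by push_cast; ring
  have f3 : 2*(m:ℝ) + (s+1) = 2*(m:ℝ) + s + 1 := by ring
  have g : (Y/2) ^ ((2*(m:ℝ)+s+1)+1) = (Y/2) ^ (2*(m:ℝ)+s+1) * (Y/2) :=
    Real.rpow_add_one (ne_of_gt hb) _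
  rw [f1, f2, f3, g, Nat.factorial_succ]
  have hGpos : (0:ℝ) < Real.Gamma ((m:ℝ) + s + 1) := Real.Gamma_pos_of_pos hp1
  have hfpos : (0:ℝ) < (m.factorial:ℝ) := by positivity
  have hP : (0:ℝ) ≤ (Y/2) ^ (2*(m:ℝ) + s + 1) := Real.rpow_nonneg hb.le _
  push_cast
  field_simp
  ring

lemma Dterm_zero {s Y : ℝ} (hs : 1 ≤ s) (hY : 0 < Y) :
    Dterm s Y 0 = Iterm (s-1) Y 0 / 2 := by
  rw [Iterm_zero_rec hs hY]
  unfold Dterm Iterm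
  have h0 : (0:ℝ) < s := by linarith
  have hG : Real.Gamma (((0:ℕ):ℝ) + s + 1) = s * Real.Gamma s := by
    norm_num [Real.Gamma_add_one (ne_of_gt h0)]
  have hnum : (Y/2) ^ (2*((0:ℕ):ℝ) + s) = (Y/2) ^ (2*((0:ℕ):ℝ) + s - 1) * (Y/2) := by
    rw [← Real.rpow_add_one (by positivity : (Y/2) ≠ 0)]
    norm_num
  push_cast at hG hnum ⊢
  rw [hG, hnum]
  have hGpos : (0:ℝ) < Real.Gamma s := Real.Gamma_pos_of_pos h0
  field_simp
  ring

lemma Dterm_succ {s Y : ℝ} (hs : 1 ≤ s) (hY : 0 < Y) (m : ℕ) :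
    Dterm s Y (m+1) = (Iterm (s-1) Y (m+1) + Iterm (s+1) Y m) / 2 := by
  rw [Iterm_succ_rec hs hY m]
  unfold Dterm Iterm
  have hp1 : (0:ℝ) < (m:ℝ) + s + 1 := by positivity
  have hG2 : Real.Gamma ((m:ℝ) + s + 2) = ((m:ℝ) + s + 1) * Real.Gamma ((m:ℝ) + s + 1) := by
    rw [show (m:ℝ) + s + 2 = ((m:ℝ) + s + 1) + 1 by ring, Real.Gamma_add_one (ne_of_gt hp1)]
  have e2 : ((m+1:ℕ):ℝ) + s + 1 = (m:ℝ) + s + 2 := by push_cast; ring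
  have e3 : (m:ℝ) + (s+1) + 1 = (m:ℝ) + s + 2 := by ring
  have f2 : 2*((m+1:ℕ):ℝ) + s - 1 = 2*(m:ℝ) + s + 1 := by push_cast; ring
  have f2' : 2*((m+1:ℕ):ℝ) + s = (2*(m:ℝ) + s + 1) + 1 := by push_cast; ring
  have f3 : 2*(m:ℝ) + (s+1) = 2*(m:ℝ) + s + 1 := by ring
  have hb : (0:ℝ) < Y/2 := by positivity
  have g : (Y/2) ^ ((2*(m:ℝ)+s+1)+1) = (Y/2) ^ (2*(m:ℝ)+s+1) * (Y/2) :=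
    Real.rpow_add_one (ne_of_gt hb) _
  rw [e2, e3, f2, f2', f3, hG2, g, Nat.factorial_succ]
  have hGpos : (0:ℝ) < Real.Gamma ((m:ℝ) + s + 1) := Real.Gamma_pos_of_pos hp1
  have hfpos : (0:ℝ) < (m.factorial:ℝ) := by positivity
  push_cast
  field_simp
  ring

lemma Dterm_nonneg {s Y : ℝ} (hs : 0 ≤ s) (hY : 0 < Y) (m : ℕ) : 0 ≤ Dterm s Y m := by
  unfold Dterm
  have h1 := gamma_shift_pos hs m
  have h2 : (0:ℝ) ≤ (Y/2) ^ (2*(m:ℝ)+s-1) := Real.rpow_nonneg (by positivity) _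
  have h3 : (0:ℝ) ≤ 2*(m:ℝ)+s := by positivity
  have h4 : (0:ℝ) < (m.factorial:ℝ) := by positivity
  positivity

lemma two_m_add_le {s : ℝ} (hs : 0 ≤ s) (m : ℕ) : 2*(m:ℝ) + s ≤ (2+s) * 2^m := by
  have h1 : (m:ℝ) ≤ 2^m := by
    exact_mod_cast (Nat.lt_two_pow_self (n := m)).le
  have h2 : (1:ℝ) ≤ 2^m := one_le_pow₀ (by norm_num)
  nlinarith

lemma Dterm_le {s Y R : ℝ} (hs : 1 ≤ s) (hY : 0 < Y) (hYR : Y ≤ R) (m : ℕ) :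
    Dterm s Y m ≤ ((2+s) * (R/2)^(s-1) / (2 * Real.Gamma (s+1))) * ((2*(R/2)^2)^m / m.factorial) := by
  unfold Dterm
  have hR : (0:ℝ) < R := lt_of_lt_of_le hY hYR
  have hG1 : (0:ℝ) < Real.Gamma (s+1) := Real.Gamma_pos_of_pos (by positivity)
  have hGle : Real.Gamma (s+1) ≤ Real.Gamma ((m:ℝ) + s + 1) := by
    have h := gamma_mul_factorial_le (s := s+1) (by linarith) m
    rw [show ((m:ℝ) + (s+1)) = (m:ℝ) + s + 1 by ring] at h
    have hf1 : (1:ℝ) ≤ m.factorial := by exact_mod_cast Nat.one_le_iff_ne_zero.2 m.factorial_ne_zero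
    nlinarith [mul_nonneg hG1.le (by linarith : (0:ℝ) ≤ (m.factorial:ℝ) - 1)]
  have hGpos := gamma_shift_pos (by linarith : (0:ℝ) ≤ s) m
  have hfpos : (0:ℝ) < (m.factorial:ℝ) := by positivity
  -- numerator bound
  have hnum : (Y/2) ^ (2*(m:ℝ)+s-1) ≤ (R/2)^(s-1) * ((R/2)^2)^m := by
    have base : (Y/2) ^ (2*(m:ℝ)+s-1) ≤ (R/2) ^ (2*(m:ℝ)+s-1) := by
      have hm : (0:ℝ) ≤ (m:ℝ) := Nat.cast_nonneg m
      apply Real.rpow_le_rpow (by positivity) (by linarith) (by linarith)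
    refine base.trans (le_of_eq ?_)
    rw [show 2*(m:ℝ)+s-1 = (s-1) + 2*(m:ℝ) by ring, Real.rpow_add (by positivity)]
    congr 1
    rw [show (2:ℝ)*(m:ℝ) = ((2*m:ℕ):ℝ) by push_cast; ring, Real.rpow_natCast, pow_mul]
  have hcoef : 2*(m:ℝ) + s ≤ (2+s) * 2^m := two_m_add_le (by linarith) m
  calc (2*(m:ℝ)+s) * (Y/2) ^ (2*(m:ℝ)+s-1) / (2 * (m.factorial * Real.Gamma ((m:ℝ)+s+1)))
      ≤ ((2+s) * 2^m) * ((R/2)^(s-1) * ((R/2)^2)^m) / (2 * (m.factorial * Real.Gamma (s+1))) := by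
        apply div_le_div₀ (mul_nonneg (mul_nonneg (by linarith : (0:ℝ) ≤ 2+s) (by positivity))
          (mul_nonneg (Real.rpow_nonneg (by positivity) _) (by positivity)))
        · apply mul_le_mul hcoef hnum (Real.rpow_nonneg (by positivity) _) (by positivity)
        · positivity
        · apply mul_le_mul_of_nonneg_left _ (by norm_num)
          exact mul_le_mul_of_nonneg_left hGle hfpos.le
    _ = ((2+s) * (R/2)^(s-1) / (2 * Real.Gamma (s+1))) * ((2*(R/2)^2)^m / m.factorial) := by
        rw [mul_pow]
        field_simp

lemma Dterm_summable_bound {s R : ℝ} :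
    Summable (fun m : ℕ => ((2+s) * (R/2)^(s-1) / (2 * Real.Gamma (s+1))) * ((2*(R/2)^2)^m / m.factorial)) :=
  (Real.summable_pow_div_factorial _).mul_left _

lemma Dterm_summable {s Y : ℝ} (hs : 1 ≤ s) (hY : 0 < Y) : Summable (Dterm s Y) :=
  Summable.of_nonneg_of_le (Dterm_nonneg (by linarith) hY) (Dterm_le hs hY le_rfl)
    Dterm_summable_bound

/-- The recurrence `I_{s-1} = (2s/Y) I_s + I_{s+1}`. -/
lemma besselI_rec {s Y : ℝ} (hs : 1 ≤ s) (hY : 0 < Y) :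
    besselI (s-1) Y = (2*s/Y) * besselI s Y + besselI (s+1) Y := by
  have hA : Summable (Iterm (s-1) Y) := Iterm_summable (by linarith) hY
  have hC : Summable (Iterm s Y) := Iterm_summable (by linarith) hY
  have hB : Summable (Iterm (s+1) Y) := Iterm_summable (by linarith) hY
  have hC' : Summable (fun m => (2*s/Y) * Iterm s Y m) := hC.mul_left _
  rw [besselI_eq_tsum, besselI_eq_tsum, besselI_eq_tsum]
  rw [Summable.tsum_eq_zero_add hA]
  have congrstep : ∑' m, Iterm (s-1) Y (m+1)
      = ∑' m, ((2*s/Y) * Iterm s Y (m+1) + Iterm (s+1) Y m) :=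
    tsum_congr (fun m => Iterm_succ_rec hs hY m)
  rw [congrstep, Summable.tsum_add ((summable_nat_add_iff 1).2 hC') hB, Iterm_zero_rec hs hY]
  rw [← add_assoc, ← Summable.tsum_eq_zero_add hC', tsum_mul_left]

/-- The derivative series sums to `(I_{s-1} + I_{s+1})/2`. -/
lemma Dterm_tsum {s Y : ℝ} (hs : 1 ≤ s) (hY : 0 < Y) :
    ∑' m, Dterm s Y m = (besselI (s-1) Y + besselI (s+1) Y) / 2 := by
  have hA : Summable (Iterm (s-1) Y) := Iterm_summable (by linarith) hY
  have hB : Summable (Iterm (s+1) Y) := Iterm_summable (by linarith) hY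
  rw [Summable.tsum_eq_zero_add (Dterm_summable hs hY), Dterm_zero hs hY]
  have congrstep : ∑' m, Dterm s Y (m+1)
      = ∑' m, ((Iterm (s-1) Y (m+1) + Iterm (s+1) Y m) / 2) :=
    tsum_congr (fun m => Dterm_succ hs hY m)
  rw [congrstep]
  have hsplit : ∑' m, ((Iterm (s-1) Y (m+1) + Iterm (s+1) Y m) / 2)
      = (∑' m, Iterm (s-1) Y (m+1)) / 2 + (∑' m, Iterm (s+1) Y m) / 2 := by
    rw [← tsum_div_const, ← tsum_div_const, ← Summable.tsum_add
      (((summable_nat_add_iff 1).2 hA).div_const 2) (hB.div_const 2)]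
    apply tsum_congr; intro m; ring
  rw [hsplit, besselI_eq_tsum, besselI_eq_tsum, Summable.tsum_eq_zero_add hA]
  ring

set_option maxHeartbeats 1000000 in
/-- Differentiability of `besselI` in the argument. -/
lemma besselI_hasDerivAt {s Y : ℝ} (hs : 1 ≤ s) (hY : 0 < Y) :
    HasDerivAt (fun W => besselI s W) ((besselI (s-1) Y + besselI (s+1) Y) / 2) Y := by
  rw [← Dterm_tsum hs hY]
  have key : HasDerivAt (fun W => ∑' m, Iterm s W m) (∑' m, Dterm s Y m) Y := by
    refine hasDerivAt_tsum_of_isPreconnected (g := fun m W => Iterm s W m)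
      (g' := fun m W => Dterm s W m) (Dterm_summable_bound (s := s) (R := Y+1))
      (isOpen_Ioo (a := 0) (b := Y+1)) (convex_Ioo _ _).isPreconnected
      (fun m W hW => ?_) (fun m W hW => ?_)
      (show Y ∈ Ioo 0 (Y+1) by constructor <;> [exact hY; linarith])
      (Iterm_summable (by linarith) hY)
      (show Y ∈ Ioo 0 (Y+1) by constructor <;> [exact hY; linarith])
    · -- pointwise derivative
      obtain ⟨hW0, hWR⟩ := hW
      have hb : W/2 ≠ 0 := by positivity
      have hd : HasDerivAt (fun W : ℝ => (W/2) ^ (2*(m:ℝ)+s))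
          ((1/2) * ((2*(m:ℝ)+s) * (W/2) ^ (2*(m:ℝ)+s-1))) W := by
        have := ((hasDerivAt_id W).div_const 2).rpow_const (p := 2*(m:ℝ)+s) (Or.inl hb)
        refine this.congr_deriv ?_
        simp only [id_eq]
        ring
      have := hd.div_const (m.factorial * Real.Gamma ((m:ℝ) + s + 1))
      refine this.congr_deriv ?_
      unfold Dterm
      field_simp
    · -- uniform bound on the open set
      obtain ⟨hW0, hWR⟩ := hW
      show ‖Dterm s W m‖ ≤ _
      rw [norm_of_nonneg (Dterm_nonneg (by linarith) hW0 m)]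
      exact Dterm_le hs hW0 hWR.le m
  exact key


/-- The (doubled) Wronskian-type quantity is constant. -/
lemma wronskian_hasDerivAt {ν : ℝ} (hν : 3/2 ≤ ν) {W : ℝ} (hW : 0 < W) :
    HasDerivAt (fun u => u * (besselI ν u * besselK (ν+1) u + besselI (ν+1) u * besselK ν u))
      0 W := by
  have e1 : ν + 1 - 1 = ν := by ring
  have hI0 := besselI_hasDerivAt (s := ν) (by linarith) hW
  have hI1 := besselI_hasDerivAt (s := ν+1) (by linarith) hW
  rw [e1] at hI1
  have hK0 := besselK_hasDerivAt ν hW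
  have hK1 := besselK_hasDerivAt (ν+1) hW
  rw [e1] at hK1
  have hraw := (hasDerivAt_id W).mul ((hI0.mul hK1).add (hI1.mul hK0))
  have him : besselI (ν-1) W = (2*ν/W) * besselI ν W + besselI (ν+1) W :=
    besselI_rec (by linarith) hW
  have hi2 : besselI (ν+1+1) W = besselI ν W - (2*(ν+1)/W) * besselI (ν+1) W := by
    have h := besselI_rec (s := ν+1) (by linarith) hW
    rw [e1] at h
    linarith
  have hkm : besselK (ν-1) W = besselK (ν+1) W - (2*ν/W) * besselK ν W := by
    have h := besselK_rec ν hW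
    linarith
  have hk2 : besselK (ν+1+1) W = besselK ν W + (2*(ν+1)/W) * besselK (ν+1) W := by
    have h := besselK_rec (ν+1) hW
    rw [e1] at h
    linarith
  refine hraw.congr_deriv ?_
  simp only [Pi.add_apply, Pi.mul_apply, id_eq]
  rw [him, hi2, hkm, hk2]
  have hWne : W ≠ 0 := ne_of_gt hW
  field_simp
  ring

lemma wronskian_const {ν : ℝ} (hν : 3/2 ≤ ν) {Y : ℝ} (hY : 0 < Y) :
    Y * (besselI ν Y * besselK (ν+1) Y + besselI (ν+1) Y * besselK ν Y)
      = 1 * (besselI ν 1 * besselK (ν+1) 1 + besselI (ν+1) 1 * besselK ν 1) := by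
  set f : ℝ → ℝ :=
    fun u => u * (besselI ν u * besselK (ν+1) u + besselI (ν+1) u * besselK ν u) with hf
  have key : ∀ A B : ℝ, 0 < A → A < B → f A = f B := by
    intro A B hA hAB
    have hderiv : ∀ x ∈ Ioo A B, HasDerivAt f ((fun _ => (0:ℝ)) x) x :=
      fun x hx => wronskian_hasDerivAt hν (lt_trans hA hx.1)
    have hcont : ContinuousOn f (Icc A B) := by
      intro x hx
      exact (wronskian_hasDerivAt hν (lt_of_lt_of_le hA hx.1)).continuousAt.continuousWithinAt
    obtain ⟨c, _, hc2⟩ := exists_hasDerivAt_eq_slope f (fun _ => (0:ℝ)) hAB hcont hderiv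
    have hBA : B - A ≠ 0 := by linarith
    field_simp at hc2
    linarith [hc2]
  rcases lt_trichotomy Y 1 with h|h|h
  · exact key Y 1 hY h
  · rw [h]
  · exact (key 1 Y one_pos h).symm

lemma exp_quarter_lt_three : exp ((1:ℝ)/4) < 3 := by
  have h := Real.exp_one_lt_d9
  calc exp ((1:ℝ)/4) ≤ exp 1 := Real.exp_le_exp.2 (by norm_num)
    _ < 3 := by linarith

lemma exp_quarter_lt_two : exp ((1:ℝ)/4) < 2 := by
  by_contra hcon
  push_neg at hcon
  have h4 : exp ((1:ℝ)/4) ^ (4:ℕ) = exp 1 := by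
    rw [← Real.exp_nat_mul]; norm_num
  have hpow : (2:ℝ)^(4:ℕ) ≤ exp ((1:ℝ)/4) ^ (4:ℕ) :=
    pow_le_pow_left₀ (by norm_num) hcon 4
  rw [h4] at hpow
  norm_num at hpow
  nlinarith [Real.exp_one_lt_d9]

/-- Uniform bound for the product at equal arguments. -/
lemma besselI_mul_besselK_le {ν Y : ℝ} (hν : 3/2 ≤ ν) (hY : 0 < Y) :
    besselI ν Y * besselK ν Y ≤ 8 := by
  have hν0 : (0:ℝ) < ν := by linarith
  have hG : (0:ℝ) < Real.Gamma ν := Real.Gamma_pos_of_pos hν0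
  have hGν : Real.Gamma ν ≠ 0 := ne_of_gt hG
  have hGadd : Real.Gamma (ν+1) = ν * Real.Gamma ν := Real.Gamma_add_one (ne_of_gt hν0)
  rcases le_or_gt Y 1 with h|h
  · -- small argument: power bounds
    have h1 := besselI_le (by linarith : (0:ℝ) ≤ ν) hY
    have h2 := besselK_le_gamma hν0 hY
    have hprod : (Y/2) ^ ν * (2/Y) ^ ν = 1 := by
      rw [← Real.mul_rpow (by positivity) (by positivity)]
      rw [show Y/2 * (2/Y) = 1 by field_simp]
      exact Real.one_rpow ν
    have hIK : besselI ν Y * besselK ν Y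
        ≤ ((Y/2) ^ ν * exp (Y^2/4) / Real.Gamma (ν+1)) * ((2/Y) ^ ν * Real.Gamma ν) :=
      mul_le_mul h1 h2 besselK_nonneg (by positivity)
    have heq : ((Y/2) ^ ν * exp (Y^2/4) / Real.Gamma (ν+1)) * ((2/Y) ^ ν * Real.Gamma ν)
        = exp (Y^2/4) * (1/ν) := by
      rw [hGadd,
        show ((Y/2) ^ ν * exp (Y^2/4) / (ν * Real.Gamma ν)) * ((2/Y) ^ ν * Real.Gamma ν)
          = ((Y/2) ^ ν * (2/Y) ^ ν) * (exp (Y^2/4) * (Real.Gamma ν / Real.Gamma ν)) / ν from by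
            ring, div_self hGν, hprod]
      ring
    rw [heq] at hIK
    have hexp : exp (Y^2/4) ≤ exp ((1:ℝ)/4) := Real.exp_le_exp.2 (by nlinarith)
    have hlast : exp (Y^2/4) * (1/ν) ≤ 3 * 1 := by
      apply mul_le_mul (by linarith [exp_quarter_lt_three]) _ (by positivity) (by norm_num)
      rw [div_le_one hν0]; linarith
    linarith
  · -- large argument: Wronskian bound
    have hw := wronskian_const hν hY
    have hν1 : (0:ℝ) < ν + 1 := by linarith
    have hG1 : (0:ℝ) < Real.Gamma (ν+1) := Real.Gamma_pos_of_pos hν1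
    have hG1ne : Real.Gamma (ν+1) ≠ 0 := ne_of_gt hG1
    have hGadd2 : Real.Gamma (ν+1+1) = (ν+1) * Real.Gamma (ν+1) :=
      Real.Gamma_add_one (ne_of_gt hν1)
    have hone : ((1:ℝ)^2/4) = (1:ℝ)/4 := by norm_num
    -- bound f(1)
    have t1 : besselI ν 1 * besselK (ν+1) 1 ≤ 2 * exp ((1:ℝ)/4) := by
      have h1 := besselI_le (by linarith : (0:ℝ) ≤ ν) one_pos
      have h2 := besselK_le_gamma hν1 one_pos
      rw [hone] at h1
      have hp : ((1:ℝ)/2) ^ ν * (2:ℝ) ^ (ν+1) = 2 := by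
        rw [show (1:ℝ)/2 = 2⁻¹ by norm_num, Real.inv_rpow (by norm_num),
          ← Real.rpow_neg (by norm_num), ← Real.rpow_add (by norm_num),
          show -ν + (ν+1) = (1:ℝ) by ring, Real.rpow_one]
      have h2' : ((2:ℝ)/1) ^ (ν+1) = (2:ℝ) ^ (ν+1) := by norm_num
      rw [h2'] at h2
      calc besselI ν 1 * besselK (ν+1) 1
          ≤ (((1:ℝ)/2) ^ ν * exp ((1:ℝ)/4) / Real.Gamma (ν+1)) * ((2:ℝ) ^ (ν+1) * Real.Gamma (ν+1)) :=
            mul_le_mul h1 h2 besselK_nonneg (by positivity)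
        _ = 2 * exp ((1:ℝ)/4) := by
            rw [show (((1:ℝ)/2) ^ ν * exp ((1:ℝ)/4) / Real.Gamma (ν+1)) * ((2:ℝ) ^ (ν+1) * Real.Gamma (ν+1))
              = (((1:ℝ)/2) ^ ν * (2:ℝ) ^ (ν+1)) * exp ((1:ℝ)/4) * (Real.Gamma (ν+1) / Real.Gamma (ν+1)) from by
                ring, div_self hG1ne, hp, mul_one]
    have t2 : besselI (ν+1) 1 * besselK ν 1 ≤ exp ((1:ℝ)/4) := by
      have h1 := besselI_le (by linarith : (0:ℝ) ≤ ν+1) one_pos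
      have h2 := besselK_le_gamma hν0 one_pos
      rw [hone] at h1
      have hp : ((1:ℝ)/2) ^ (ν+1) * (2:ℝ) ^ ν = 1/2 := by
        rw [show (1:ℝ)/2 = 2⁻¹ by norm_num, Real.inv_rpow (by norm_num),
          ← Real.rpow_neg (by norm_num), ← Real.rpow_add (by norm_num),
          show -(ν+1) + ν = (-1:ℝ) by ring, Real.rpow_neg_one]
      have h2' : ((2:ℝ)/1) ^ ν = (2:ℝ) ^ ν := by norm_num
      rw [h2'] at h2
      calc besselI (ν+1) 1 * besselK ν 1
          ≤ (((1:ℝ)/2) ^ (ν+1) * exp ((1:ℝ)/4) / Real.Gamma (ν+1+1)) * ((2:ℝ) ^ ν * Real.Gamma ν) :=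
            mul_le_mul h1 h2 besselK_nonneg (by positivity)
        _ = exp ((1:ℝ)/4) / 2 * (1 / ((ν+1) * ν)) := by
            have hfr : Real.Gamma ν / Real.Gamma (ν+1+1) = 1 / ((ν+1) * ν) := by
              rw [hGadd2, hGadd]
              field_simp
            rw [show (((1:ℝ)/2) ^ (ν+1) * exp ((1:ℝ)/4) / Real.Gamma (ν+1+1)) * ((2:ℝ) ^ ν * Real.Gamma ν)
                = ((((1:ℝ)/2) ^ (ν+1) * (2:ℝ) ^ ν) * exp ((1:ℝ)/4)) * (Real.Gamma ν / Real.Gamma (ν+1+1)) from by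
                  ring, hp, hfr]
            ring
        _ ≤ exp ((1:ℝ)/4) := by
            have h5 : (1:ℝ)/((ν+1)*ν) ≤ 1 := by
              rw [div_le_one (by nlinarith)]
              nlinarith
            nlinarith [Real.exp_pos ((1:ℝ)/4)]
    -- combine
    have hIK : besselI ν Y * besselK ν Y
        ≤ besselI ν Y * besselK (ν+1) Y + besselI (ν+1) Y * besselK ν Y := by
      have h1 : besselI ν Y * besselK ν Y ≤ besselI ν Y * besselK (ν+1) Y :=
        mul_le_mul_of_nonneg_left (besselK_mono_order (by linarith) (by linarith) hY)
          (besselI_nonneg (by linarith) hY.le)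
      have h2 : 0 ≤ besselI (ν+1) Y * besselK ν Y :=
        mul_nonneg (besselI_nonneg (by linarith) hY.le) besselK_nonneg
      linarith
    have hsum_nonneg : 0 ≤ besselI ν Y * besselK (ν+1) Y + besselI (ν+1) Y * besselK ν Y := by
      have h1 : 0 ≤ besselI ν Y * besselK (ν+1) Y :=
        mul_nonneg (besselI_nonneg (by linarith) hY.le) besselK_nonneg
      have h2 : 0 ≤ besselI (ν+1) Y * besselK ν Y :=
        mul_nonneg (besselI_nonneg (by linarith) hY.le) besselK_nonneg
      linarith
    have hYb : besselI ν Y * besselK (ν+1) Y + besselI (ν+1) Y * besselK ν Y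
        ≤ 3 * exp ((1:ℝ)/4) := by
      nlinarith [hw, t1, t2, mul_nonneg hsum_nonneg (by linarith : (0:ℝ) ≤ Y - 1)]
    nlinarith [exp_quarter_lt_two, hIK, hYb]

/-- The key off-diagonal product bound. -/
lemma product_master {ν x y z : ℝ} (hν : 3/2 ≤ ν) (hy : 0 < y) (hxy : y < x) (hz : 0 < z) :
    besselK ν (x*z) * besselI ν (y*z) ≤ 8 * (y/x) ^ (ν/2) * exp (-((x-y)*z/2)) := by
  have hx : 0 < x := lt_trans hy hxy
  have hY : 0 < y*z := by positivity
  have hX : 0 < x*z := by positivity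
  have hYX : y*z ≤ x*z := by nlinarith
  have hν' : (0:ℝ) ≤ ν := by linarith
  have hKX : 0 ≤ besselK ν (x*z) := besselK_nonneg
  have hIY : 0 ≤ besselI ν (y*z) := besselI_nonneg hν' hY.le
  have hP1 : besselK ν (x*z) * besselI ν (y*z) ≤ exp (-((x-y)*z)) * 8 := by
    calc besselK ν (x*z) * besselI ν (y*z)
        ≤ (exp (-(x*z - y*z)) * besselK ν (y*z)) * besselI ν (y*z) :=
          mul_le_mul_of_nonneg_right (besselK_le_exp_mul hν' hY hYX) hIY
      _ = exp (-(x*z - y*z)) * (besselI ν (y*z) * besselK ν (y*z)) := by ring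
      _ ≤ exp (-(x*z - y*z)) * 8 :=
          mul_le_mul_of_nonneg_left (besselI_mul_besselK_le hν hY) (Real.exp_pos _).le
      _ = exp (-((x-y)*z)) * 8 := by rw [show x*z - y*z = (x-y)*z by ring]
  have hP2 : besselK ν (x*z) * besselI ν (y*z) ≤ (y/x) ^ ν * 8 := by
    calc besselK ν (x*z) * besselI ν (y*z)
        ≤ besselK ν (x*z) * (((y*z)/(x*z)) ^ ν * besselI ν (x*z)) :=
          mul_le_mul_of_nonneg_left (besselI_ratio hν' hY hYX) hKX
      _ = ((y*z)/(x*z)) ^ ν * (besselI ν (x*z) * besselK ν (x*z)) := by ring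
      _ ≤ ((y*z)/(x*z)) ^ ν * 8 :=
          mul_le_mul_of_nonneg_left (besselI_mul_besselK_le hν hX)
            (Real.rpow_nonneg (by positivity) _)
      _ = (y/x) ^ ν * 8 := by rw [mul_div_mul_right _ _ (ne_of_gt hz)]
  -- geometric mean
  have hsq : (besselK ν (x*z) * besselI ν (y*z))^2
      ≤ (exp (-((x-y)*z)) * 8) * ((y/x) ^ ν * 8) := by
    rw [sq]
    apply mul_le_mul hP1 hP2 (mul_nonneg hKX hIY) (by positivity)
  have hQ : besselK ν (x*z) * besselI ν (y*z)
      = Real.sqrt ((besselK ν (x*z) * besselI ν (y*z))^2) :=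
    (Real.sqrt_sq (mul_nonneg hKX hIY)).symm
  rw [hQ]
  calc Real.sqrt ((besselK ν (x*z) * besselI ν (y*z))^2)
      ≤ Real.sqrt ((exp (-((x-y)*z)) * 8) * ((y/x) ^ ν * 8)) := Real.sqrt_le_sqrt hsq
    _ = 8 * (y/x) ^ (ν/2) * exp (-((x-y)*z/2)) := by
        rw [show (exp (-((x-y)*z)) * 8) * ((y/x) ^ ν * 8)
            = 64 * (exp (-((x-y)*z)) * (y/x) ^ ν) by ring]
        rw [Real.sqrt_mul (by norm_num : (0:ℝ) ≤ 64),
          Real.sqrt_mul (Real.exp_pos _).le]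
        have h64 : Real.sqrt 64 = 8 := by
          rw [show (64:ℝ) = 8^2 by norm_num, Real.sqrt_sq (by norm_num : (0:ℝ) ≤ 8)]
        have hexp : Real.sqrt (exp (-((x-y)*z))) = exp (-((x-y)*z/2)) := by
          rw [Real.sqrt_eq_rpow, ← Real.exp_mul]
          congr 1
          ring
        have hrp : Real.sqrt ((y/x) ^ ν) = (y/x) ^ (ν/2) := by
          rw [Real.sqrt_eq_rpow, ← Real.rpow_mul (by positivity : (0:ℝ) ≤ y/x)]
          congr 1
          ring
        rw [h64, hexp, hrp]
        ring


lemma pow_mul_exp_le {b t : ℝ} (k : ℕ) (hb : 0 < b) (ht : 0 ≤ t) :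
    t^k * exp (-(b*t)) ≤ k.factorial / b^k := by
  have h := Real.pow_div_factorial_le_exp (x := b*t) (by positivity) k
  have hfk : (0:ℝ) < (k.factorial:ℝ) := by positivity
  have h2 : (b*t)^k ≤ k.factorial * exp (b*t) := by
    rw [div_le_iff₀ hfk] at h
    linarith [h]
  rw [mul_pow] at h2
  have hexp : exp (-(b*t)) = (exp (b*t))⁻¹ := Real.exp_neg _
  rw [hexp, le_div_iff₀ (by positivity : (0:ℝ) < b^k)]
  have hepos : (0:ℝ) < exp (b*t) := Real.exp_pos _
  rw [show t^k * (exp (b*t))⁻¹ * b^k = (b^k * t^k) * (exp (b*t))⁻¹ by ring]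
  rw [show (k.factorial:ℝ) = (k.factorial * exp (b*t)) * (exp (b*t))⁻¹ by field_simp]
  apply mul_le_mul_of_nonneg_right h2 (by positivity)

lemma support_bdd {g : ℝ → ℝ} (h : HasCompactSupport g) : ∃ R, ∀ u ∈ support g, u ≤ R := by
  obtain ⟨R, hR⟩ := h.isBounded.subset_closedBall 0
  refine ⟨R, fun u hu => ?_⟩
  have := hR (subset_tsupport g hu)
  rw [Metric.mem_closedBall, Real.dist_eq, sub_zero] at this
  exact (le_abs_self u).trans this


end BesselProof

open BesselProof in
/-- Let `φ, ψ` be smooth bounded non-negative functions on `[0,∞)` with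
disjoint supports, at least one of them compactly supported, whose supports are separated:
`y < x`, `x - y > a > 0` and `x/y ≥ c > 1` for all `x ∈ supp φ`, `y ∈ supp ψ`.  Let `δ > 0`.
Then for every `N ∈ ℕ` there is a constant `C_N > 0` such that for all `ν ≥ 3/2 + δ`,
`z > 0`, `x ∈ supp φ` and `y ∈ supp ψ`,
`|ν² φ(x) √(xy) K_ν(xz) I_ν(yz) ψ(y)| ≤ C_N (νz)^{-N}`. -/
theorem bessel_kernel_offdiagonal_decay
    (φ ψ : ℝ → ℝ) (a c δ : ℝ)
    (hφ_smooth : ContDiffOn ℝ (⊤ : ℕ∞) φ (Ici 0)) (hψ_smooth : ContDiffOn ℝ (⊤ : ℕ∞) ψ (Ici 0))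
    (hφ_bdd : ∃ M, ∀ x, |φ x| ≤ M) (hψ_bdd : ∃ M, ∀ x, |ψ x| ≤ M)
    (hφ_nonneg : ∀ x, 0 ≤ φ x) (hψ_nonneg : ∀ x, 0 ≤ ψ x)
    (hφ_supp : support φ ⊆ Ici 0) (hψ_supp : support ψ ⊆ Ici 0)
    (h_disj : Disjoint (support φ) (support ψ))
    (h_cpt : HasCompactSupport φ ∨ HasCompactSupport ψ)
    (ha : 0 < a) (hc : 1 < c) (hδ : 0 < δ)
    (h_sep : ∀ x ∈ support φ, ∀ y ∈ support ψ, y < x ∧ a < x - y ∧ c ≤ x / y) :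
    ∀ N : ℕ, ∃ C > (0 : ℝ), ∀ ν : ℝ, 3 / 2 + δ ≤ ν → ∀ z : ℝ, 0 < z →
      ∀ x ∈ support φ, ∀ y ∈ support ψ,
        |ν ^ 2 * φ x * Real.sqrt (x * y) * besselK ν (x * z) * besselI ν (y * z) * ψ y| ≤
          C * (ν * z) ^ (-(N : ℝ)) := by
  intro N
  obtain ⟨Mφ, hMφ⟩ := hφ_bdd
  obtain ⟨Mψ, hMψ⟩ := hψ_bdd
  -- a uniform bound on y over the relevant supports
  have hD : ∃ D, 0 < D ∧ ∀ x ∈ support φ, ∀ y ∈ support ψ, y ≤ D := by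
    rcases h_cpt with h|h
    · obtain ⟨R, hR⟩ := support_bdd h
      exact ⟨max R 1, lt_max_of_lt_right one_pos,
        fun x hx y hy => le_max_of_le_left ((h_sep x hx y hy).1.le.trans (hR x hx))⟩
    · obtain ⟨R, hR⟩ := support_bdd h
      exact ⟨max R 1, lt_max_of_lt_right one_pos,
        fun x hx y hy => le_max_of_le_left (hR y hy)⟩
  obtain ⟨D, hD0, hDle⟩ := hD
  set lc : ℝ := Real.log c with hlc
  have hlc0 : 0 < lc := Real.log_pos hc
  set G : ℝ := 8 * (max Mφ 0 + 1) * (max Mψ 0 + 1) * D * exp (lc/2) with hG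
  have hG0 : 0 < G := by positivity
  set P : ℝ := G * ((N+2).factorial / (lc/2)^(N+2)) * (N.factorial / (a/2)^N) with hP
  have hP0 : 0 < P := by positivity
  refine ⟨P, hP0, ?_⟩
  intro ν hν z hz x hx y hy
  obtain ⟨hyx, hax, hcx⟩ := h_sep x hx y hy
  have hν32 : 3/2 ≤ ν := by linarith
  have hν0 : 0 < ν := by linarith
  have hy0 : 0 < y := by
    rcases (Set.mem_Ici.1 (hψ_supp hy)).lt_or_eq with h|h
    · exact h
    · exfalso
      rw [← h] at hcx
      simp at hcx
      linarith
  have hx0 : 0 < x := lt_trans hy0 hyx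
  -- step 1: bound the absolute value by the positive quantity
  have habs : |ν ^ 2 * φ x * Real.sqrt (x * y) * besselK ν (x * z) * besselI ν (y * z) * ψ y|
      = ν ^ 2 * |φ x| * Real.sqrt (x * y) * besselK ν (x * z) * besselI ν (y * z) * |ψ y| := by
    rw [abs_mul, abs_mul, abs_mul, abs_mul, abs_mul]
    rw [abs_of_nonneg (sq_nonneg ν), abs_of_nonneg (Real.sqrt_nonneg _),
      abs_of_nonneg (besselK_nonneg (s := ν) (X := x*z)),
      abs_of_nonneg (besselI_nonneg hν0.le (by positivity))]
  rw [habs]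
  -- step 2: the core estimate
  have hcore : besselK ν (x*z) * besselI ν (y*z) ≤ 8 * (y/x) ^ (ν/2) * exp (-((x-y)*z/2)) :=
    product_master hν32 hy0 hyx hz
  -- step 3: the ratio/sqrt collapse
  have hyx1 : y/x ≤ 1/c := by
    rw [div_le_div_iff₀ hx0 (by linarith : (0:ℝ) < c)]
    rw [le_div_iff₀ hy0] at hcx
    linarith
  have hratio : Real.sqrt (x*y) * (y/x) ^ (ν/2) ≤ D * (exp (lc/2) * exp (-(lc/2) * ν)) := by
    have hsplit : (y/x) ^ (ν/2) = (y/x) ^ ((1:ℝ)/2) * (y/x) ^ ((ν-1)/2) := by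
      rw [← Real.rpow_add (by positivity)]
      congr 1
      ring
    have hs1 : Real.sqrt (x*y) * (y/x) ^ ((1:ℝ)/2) = y := by
      rw [← Real.sqrt_eq_rpow, ← Real.sqrt_mul (by positivity)]
      rw [show x*y*(y/x) = y^2 by field_simp]
      exact Real.sqrt_sq hy0.le
    have hs2 : (y/x) ^ ((ν-1)/2) ≤ exp (lc/2) * exp (-(lc/2) * ν) := by
      have h1 : (y/x) ^ ((ν-1)/2) ≤ (1/c) ^ ((ν-1)/2) :=
        Real.rpow_le_rpow (by positivity) hyx1 (by linarith)
      have h2 : ((1:ℝ)/c) ^ ((ν-1)/2) = exp (lc/2) * exp (-(lc/2) * ν) := by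
        rw [Real.rpow_def_of_pos (by positivity : (0:ℝ) < 1/c)]
        rw [Real.log_div (by norm_num) (by linarith : c ≠ 0), Real.log_one]
        rw [← Real.exp_add]
        congr 1
        field_simp [hlc]
        ring
      linarith [h2 ▸ h1]
    calc Real.sqrt (x*y) * (y/x) ^ (ν/2)
        = (Real.sqrt (x*y) * (y/x) ^ ((1:ℝ)/2)) * (y/x) ^ ((ν-1)/2) := by
          rw [hsplit]; ring
      _ = y * (y/x) ^ ((ν-1)/2) := by rw [hs1]
      _ ≤ D * (exp (lc/2) * exp (-(lc/2) * ν)) := by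
          apply mul_le_mul (hDle x hx y hy) hs2 (Real.rpow_nonneg (by positivity) _) (by linarith)
  -- step 4: the z-exponential
  have hzexp : exp (-((x-y)*z/2)) ≤ exp (-(a/2) * z) := by
    apply Real.exp_le_exp.2
    nlinarith
  -- assemble the main pointwise bound
  have hMφ' : |φ x| ≤ max Mφ 0 + 1 := by
    have := hMφ x
    have h2 : Mφ ≤ max Mφ 0 := le_max_left _ _
    linarith
  have hMψ' : |ψ y| ≤ max Mψ 0 + 1 := by
    have := hMψ y
    have h2 : Mψ ≤ max Mψ 0 := le_max_left _ _
    linarith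
  have main : ν ^ 2 * |φ x| * Real.sqrt (x * y) * besselK ν (x * z) * besselI ν (y * z) * |ψ y|
      ≤ G * (ν^2 * exp (-(lc/2) * ν)) * exp (-(a/2) * z) := by
    have e1 : ν ^ 2 * |φ x| * Real.sqrt (x * y) * besselK ν (x * z) * besselI ν (y * z) * |ψ y|
        = (|φ x| * |ψ y|) * (ν^2 * (Real.sqrt (x*y) * (besselK ν (x*z) * besselI ν (y*z)))) := by
      ring
    rw [e1]
    have hb1 : Real.sqrt (x*y) * (besselK ν (x*z) * besselI ν (y*z))
        ≤ Real.sqrt (x*y) * (8 * (y/x) ^ (ν/2) * exp (-((x-y)*z/2))) :=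
      mul_le_mul_of_nonneg_left hcore (Real.sqrt_nonneg _)
    have hb2 : Real.sqrt (x*y) * (8 * (y/x) ^ (ν/2) * exp (-((x-y)*z/2)))
        ≤ 8 * (D * (exp (lc/2) * exp (-(lc/2) * ν))) * exp (-(a/2) * z) := by
      rw [show Real.sqrt (x*y) * (8 * (y/x) ^ (ν/2) * exp (-((x-y)*z/2)))
          = 8 * (Real.sqrt (x*y) * (y/x) ^ (ν/2)) * exp (-((x-y)*z/2)) by ring]
      apply mul_le_mul (mul_le_mul_of_nonneg_left hratio (by norm_num)) hzexp
        (Real.exp_pos _).le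
      positivity
    have hb3 : Real.sqrt (x*y) * (besselK ν (x*z) * besselI ν (y*z))
        ≤ 8 * (D * (exp (lc/2) * exp (-(lc/2) * ν))) * exp (-(a/2) * z) := le_trans hb1 hb2
    calc (|φ x| * |ψ y|) * (ν^2 * (Real.sqrt (x*y) * (besselK ν (x*z) * besselI ν (y*z))))
        ≤ ((max Mφ 0 + 1) * (max Mψ 0 + 1)) *
            (ν^2 * (8 * (D * (exp (lc/2) * exp (-(lc/2) * ν))) * exp (-(a/2) * z))) := by
          apply mul_le_mul
          · exact mul_le_mul hMφ' hMψ' (abs_nonneg _) (by positivity)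
          · apply mul_le_mul_of_nonneg_left hb3 (by positivity)
          · have hKI : 0 ≤ besselK ν (x*z) * besselI ν (y*z) :=
              mul_nonneg besselK_nonneg (besselI_nonneg hν0.le (by positivity))
            positivity
          · positivity
      _ = G * (ν^2 * exp (-(lc/2) * ν)) * exp (-(a/2) * z) := by
          rw [hG]; ring
  -- step 5: multiply by (νz)^N and conclude
  have hνz : (0:ℝ) < ν * z := by positivity
  rw [Real.rpow_neg hνz.le, Real.rpow_natCast, ← div_eq_mul_inv, le_div_iff₀ (by positivity)]
  calc (ν ^ 2 * |φ x| * Real.sqrt (x * y) * besselK ν (x * z) * besselI ν (y * z) * |ψ y|) * (ν*z)^N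
      ≤ (G * (ν^2 * exp (-(lc/2) * ν)) * exp (-(a/2) * z)) * (ν*z)^N := by
        apply mul_le_mul_of_nonneg_right main (by positivity)
    _ = G * (ν^(N+2) * exp (-((lc/2) * ν))) * (z^N * exp (-((a/2) * z))) := by
        rw [mul_pow, pow_add]
        ring_nf
    _ ≤ G * ((N+2).factorial / (lc/2)^(N+2)) * (N.factorial / (a/2)^N) := by
        have g1 : ν^(N+2) * exp (-((lc/2) * ν)) ≤ (N+2).factorial / (lc/2)^(N+2) :=
          pow_mul_exp_le (N+2) (by positivity) hν0.le
        have g2 : z^N * exp (-((a/2) * z)) ≤ N.factorial / (a/2)^N :=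
          pow_mul_exp_le N (by positivity) hz.le
        have h1 : 0 ≤ ν^(N+2) * exp (-((lc/2) * ν)) := by positivity
        have h2 : 0 ≤ z^N * exp (-((a/2) * z)) := by positivity
        apply mul_le_mul (mul_le_mul_of_nonneg_left g1 hG0.le) g2 h2 (by positivity)
    _ = P := by rw [hP]
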